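/- arXiv:1512.06817 — 6 statements merged into one kernel-verified Lean document; each statement's English description precedes it below -/
import Mathlib

section
/- Let A be a finite alphabet and let M be a set of finite words over A containing words of arbitrarily large length. Then there exists an infinite word V : ℕ → A such that every factor of V is a factor of some word belonging to M. -/
/-- The factor of the infinite word `W` of length `n` occurring at position `i`. -/
def factorAt {A : Type*} (W : ℕ → A) (i n : ℕ) : List A :=
  (List.range n).map (fun j => W (i + j))

/-- `u` is a factor of the infinite word `W`. -/
def IsFactor {A : Type*} (W : ℕ → A) (u : List A) : Prop :=
  ∃ i : ℕ, u = factorAt W i u.length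

/-!
Pad the long words of `M` into infinite words and take their limit along a nonprincipal
ultrafilter; the limit exists letter by letter because the alphabet is finite. Any window of
the limit word agrees with the same window of almost every padded word, in particular of one
long enough that the window lies inside the unpadded word, where it is a factor of a word of `M`.
-/

theorem Ultrafilter.exists_eventually_eq {ι A : Type*} [Finite A] (U : Ultrafilter ι)
    (g : ι → A) : ∃ a, ∀ᶠ x in U, g x = a := by
  obtain ⟨a, ha⟩ := (U.map g).eq_pure_of_finite
  exact ⟨a, Ultrafilter.mem_map.1 (ha ▸ Filter.mem_pure.2 rfl : {a} ∈ U.map g)⟩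

theorem factorAt_eq_take_drop {A : Type*} {W : ℕ → A} {w : List A} {d : A} {i n : ℕ}
    (hlen : i + n ≤ w.length) (hW : ∀ j < n, w.getD (i + j) d = W (i + j)) :
    factorAt W i n = (w.drop i).take n := by
  apply List.ext_getElem
  · simp only [factorAt, List.length_map, List.length_range, List.length_take,
      List.length_drop]
    omega
  · intro j hj _
    have hjn : j < n := by simpa [factorAt] using hj
    simp [factorAt, ← hW j hjn, List.getElem?_eq_getElem (by omega : i + j < w.length)]

theorem factorAt_isInfix {A : Type*} {W : ℕ → A} {w : List A} {d : A} {i n : ℕ}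
    (hlen : i + n ≤ w.length) (hW : ∀ j < n, w.getD (i + j) d = W (i + j)) :
    factorAt W i n <:+: w := by
  rw [factorAt_eq_take_drop hlen hW]
  exact (List.take_prefix n _).isInfix.trans (List.drop_suffix i w).isInfix

/-- Compactness lemma: if a set `M` of finite words over a finite alphabet contains
words of arbitrarily large length, then there is an infinite word all of whose
factors are factors of words of `M`. -/
theorem stmt0 {A : Type*} [Fintype A] (M : Set (List A))
    (hM : ∀ n : ℕ, ∃ w ∈ M, n ≤ w.length) :
    ∃ V : ℕ → A, ∀ u : List A, IsFactor V u → ∃ w ∈ M, u <:+: w := by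
  obtain ⟨d⟩ : Nonempty A := by
    obtain ⟨_ | ⟨a, _⟩, _, hlen⟩ := hM 1
    · simp at hlen
    · exact ⟨a⟩
  choose w hwM hwlen using hM
  let U : Ultrafilter ℕ := .of Filter.atTop
  choose V hV using fun i => U.exists_eventually_eq fun n => (w n).getD i d
  refine ⟨V, fun u ⟨i, hu⟩ => ?_⟩
  have hagree : ∀ᶠ n in U, ∀ j < u.length, (w n).getD (i + j) d = V (i + j) :=
    (Filter.eventually_all_finite (Set.finite_Iio u.length)).2 fun j _ => hV (i + j)
  have hlong : ∀ᶠ n in U, i + u.length ≤ n :=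
    Ultrafilter.of_le Filter.atTop (Filter.eventually_ge_atTop _)
  obtain ⟨n, hn, hin⟩ := (hagree.and hlong).exists
  rw [hu]
  exact ⟨w n, hwM n, factorAt_isInfix (hin.trans (hwlen n)) hn⟩
end

section
/- For an infinite word W : ℕ → A over a finite alphabet A, the following are equivalent: (a) W is uniformly recurrent, i.e., for every factor v of W there exists N such that v is a factor of every factor of W of length N; (b) for every infinite word V : ℕ → A, if every factor of V is a factor of W, then every factor of W is a factor of V. -/
/-- `W` is uniformly recurrent: every factor `v` occurs in every sufficiently long
factor of `W`. -/
def UniformlyRecurrent {A : Type*} (W : ℕ → A) : Prop :=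
  ∀ v : List A, IsFactor W v → ∃ N : ℕ,
    ∀ u : List A, IsFactor W u → u.length = N → v <:+: u

/-!
(a) ⇒ (b): if `v` occurs in every factor of `W` of length `N`, it occurs in the prefix of length
`N` of any `V` whose factors are factors of `W`.

(b) ⇒ (a): if some factor `v` of `W` is avoided by arbitrarily long factors of `W`, the factors
of `W` avoiding `v` form a factorial language with words of every length. By Kőnig's lemma
(the alphabet is finite) it contains all prefixes, hence all factors, of some infinite word `V`.
Then every factor of `V` is a factor of `W`, but `v` is not a factor of `V`.
-/

section Factors

variable {A : Type*}

@[simp] lemma length_factorAt (W : ℕ → A) (i n : ℕ) : (factorAt W i n).length = n := by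
  simp [factorAt]

@[simp] lemma getElem_factorAt (W : ℕ → A) (i n j : ℕ) (h : j < (factorAt W i n).length) :
    (factorAt W i n)[j] = W (i + j) := by
  simp [factorAt]

lemma factorAt_add (W : ℕ → A) (i m n : ℕ) :
    factorAt W i (m + n) = factorAt W i m ++ factorAt W (i + m) n := by
  simp only [factorAt, List.range_add, List.map_append, List.map_map]
  congr 1
  exact List.map_congr_left fun j _ => by simp [add_assoc]

lemma isFactor_factorAt (W : ℕ → A) (i n : ℕ) : IsFactor W (factorAt W i n) :=
  ⟨i, by simp⟩

lemma factorAt_infix_factorAt_zero (W : ℕ → A) (i n : ℕ) :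
    factorAt W i n <:+: factorAt W 0 (i + n) := by
  rw [factorAt_add, zero_add]
  exact (List.suffix_append _ _).isInfix

lemma isFactor_of_infix_factorAt {W : ℕ → A} {u : List A} {i n : ℕ}
    (h : u <:+: factorAt W i n) : IsFactor W u := by
  obtain ⟨s, t, hst⟩ := h
  have hlen : s.length + u.length + t.length = n := by
    simpa [add_assoc] using congrArg List.length hst
  refine ⟨i + s.length, ?_⟩
  rw [← hlen, factorAt_add, factorAt_add] at hst
  exact (List.append_inj (List.append_inj hst (by simp)).1 (by simp)).2

lemma IsFactor.of_infix {W : ℕ → A} {u w : List A} (hw : IsFactor W w) (hu : u <:+: w) :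
    IsFactor W u := by
  obtain ⟨i, hi⟩ := hw
  rw [hi] at hu
  exact isFactor_of_infix_factorAt hu

end Factors

section Konig

variable {A : Type*} [Finite A]

lemma exists_forall_factorAt_zero_mem (S : Set (List A))
    (hS : ∀ ⦃u w⦄, u <+: w → w ∈ S → u ∈ S) (hlen : ∀ n, ∃ u ∈ S, u.length = n) :
    ∃ V : ℕ → A, ∀ n, factorAt V 0 n ∈ S := by
  let α : ℕ → Type _ := fun i => {u : List A // u ∈ S ∧ u.length = i}
  have : ∀ i, Nonempty (α i) := fun i =>
    let ⟨u, hu⟩ := hlen i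
    ⟨⟨u, hu⟩⟩
  have : Subsingleton (α 0) :=
    ⟨fun u w => Subtype.ext (by rw [List.eq_nil_of_length_eq_zero u.2.2,
      List.eq_nil_of_length_eq_zero w.2.2])⟩
  let π : {i j : ℕ} → i ≤ j → α j → α i := fun {i} _ hij u =>
    ⟨u.1.take i, hS (List.take_prefix _ _) u.2.1, by simp [u.2.2, hij]⟩
  obtain ⟨f, hf⟩ := exists_seq_forall_proj_of_forall_finite π
    (fun i u => Subtype.ext (List.take_of_length_le u.2.2.le))
    (fun i j k hij _ u => Subtype.ext (by simp [π, List.take_take, min_eq_left hij]))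
    (fun i _ => ((List.finite_length_eq A (i + 1)).preimage Subtype.val_injective.injOn).subset
      fun w _ => w.2.2)
  let V : ℕ → A := fun n => (f (n + 1)).1[n]'(by simp [(f (n + 1)).2.2])
  refine ⟨V, fun n => ?_⟩
  convert (f n).2.1 using 1
  refine List.ext_getElem (by simp [(f n).2.2]) fun j hj _ => ?_
  have hjn : j + 1 ≤ n := by simpa using hj
  have hprefix : (f n).1.take (j + 1) = (f (j + 1)).1 := congrArg Subtype.val (hf hjn)
  have hj' : j < (f (j + 1)).1.length := by simp [(f (j + 1)).2.2]
  have hjn' : j < ((f n).1.take (j + 1)).length := by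
    simp only [List.length_take, (f n).2.2]; omega
  calc
    (factorAt V 0 n)[j] = V j := by rw [getElem_factorAt, zero_add]
    _ = (f (j + 1)).1[j] := rfl
    _ = ((f n).1.take (j + 1))[j] := List.getElem_of_eq hprefix.symm _
    _ = (f n).1[j] := List.getElem_take

lemma exists_forall_isFactor_mem (S : Set (List A))
    (hS : ∀ ⦃u w⦄, u <:+: w → w ∈ S → u ∈ S) (hlen : ∀ n, ∃ u ∈ S, u.length = n) :
    ∃ V : ℕ → A, ∀ u, IsFactor V u → u ∈ S := by
  obtain ⟨V, hV⟩ := exists_forall_factorAt_zero_mem S (fun _ _ h => hS h.isInfix) hlen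
  refine ⟨V, fun u ⟨i, hu⟩ => hS ?_ (hV (i + u.length))⟩
  nth_rw 1 [hu]
  exact factorAt_infix_factorAt_zero V i u.length

end Konig

/-- An infinite word `W` over a finite alphabet is uniformly recurrent iff any
infinite word `V` whose factors are all factors of `W` has all factors of `W`
among its own factors. -/
theorem stmt1 {A : Type*} [Fintype A] (W : ℕ → A) :
    UniformlyRecurrent W ↔
      ∀ V : ℕ → A, (∀ u : List A, IsFactor V u → IsFactor W u) →
        (∀ u : List A, IsFactor W u → IsFactor V u) := by
  constructor
  · intro hW V hVW u hu
    obtain ⟨N, hN⟩ := hW u hu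
    have hpre := isFactor_factorAt V 0 N
    exact hpre.of_infix (hN _ (hVW _ hpre) (length_factorAt V 0 N))
  · intro h v hv
    by_contra! havoid
    let S : Set (List A) := {u | IsFactor W u ∧ ¬ v <:+: u}
    obtain ⟨V, hV⟩ := exists_forall_isFactor_mem S
      (fun _ _ hxy hy => ⟨hy.1.of_infix hxy, fun hvx => hy.2 (hvx.trans hxy)⟩)
      (fun n => let ⟨u, hu, hlen, hvu⟩ := havoid n; ⟨u, ⟨hu, hvu⟩, hlen⟩)
    exact (hV v (h V (fun u hu => (hV u hu).1) v hv)).2 (List.infix_refl v)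
end

section
/- Let W : ℕ → {a, b} be an infinite word over the two-letter alphabet {a, b} satisfying T_W(n) = n + 1 for all n ≥ 1 (a Sturmian word). Then exactly one of the two words aa and bb is a factor of W. -/
/-- The complexity function: the number of distinct factors of `W` of length `n`. -/
noncomputable def complexity {A : Type*} (W : ℕ → A) (n : ℕ) : ℕ :=
  Set.ncard {u : List A | u.length = n ∧ IsFactor W u}

/-!
Write `a = true`, `b = false`. Complexity `3` in length `2` means that exactly one of the four
binary words of length two is missing from `W`. If neither `aa` nor `bb` occurs, at most `ab` and `ba` remain. If both occur,
the missing word is `ab` or `ba`, say `ab`; then after the first `a` the word is constantly `a`,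
and an eventually constant word has bounded complexity, contradicting `T_W(n) = n + 1`.
-/

section Factors

variable {A : Type*} (W : ℕ → A)

theorem isFactor_pair_iff (c d : A) : IsFactor W [c, d] ↔ ∃ i, W i = c ∧ W (i + 1) = d := by
  simp [IsFactor, factorAt, List.range_succ, eq_comm]

theorem complexity_le_ncard {n : ℕ} {S : Set (List A)} (hS : S.Finite)
    (hW : ∀ u, u.length = n → IsFactor W u → u ∈ S) : complexity W n ≤ S.ncard :=
  Set.ncard_le_ncard (fun u hu => hW u hu.1 hu.2) hS

theorem ncard_le_complexity [Finite A] {n : ℕ} {S : Set (List A)}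
    (hS : ∀ u ∈ S, u.length = n ∧ IsFactor W u) : S.ncard ≤ complexity W n :=
  Set.ncard_le_ncard hS ((List.finite_length_eq A n).subset fun _ hu => hu.1)

theorem complexity_le_of_forall_ge_eq {N : ℕ} {c : A} (hc : ∀ m, N ≤ m → W m = c) (n : ℕ) :
    complexity W n ≤ N + 1 := by
  have hsub : {u : List A | u.length = n ∧ IsFactor W u} ⊆
      (fun i => factorAt W i n) '' Set.Iic N := by
    rintro u ⟨rfl, i, hi⟩
    refine ⟨min i N, min_le_right i N, hi ▸ ?_⟩
    simp only [factorAt, List.length_map, List.length_range]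
    refine List.map_congr_left fun j _ => ?_
    rcases le_total i N with hiN | hNi
    · rw [min_eq_left hiN]
    · rw [min_eq_right hNi, hc _ (by omega), hc _ (by omega)]
  calc complexity W n ≤ ((fun i => factorAt W i n) '' Set.Iic N).ncard :=
        Set.ncard_le_ncard hsub ((Set.finite_Iic N).image _)
    _ ≤ (Set.Iic N).ncard := Set.ncard_image_le (Set.finite_Iic N)
    _ = N + 1 := by simp [← Finset.coe_Iic, Set.ncard_coe_finset]

end Factors

section Binary

variable {W : ℕ → Bool}

theorem eq_of_not_isFactor_flip {c : Bool} (hW : ¬ IsFactor W [c, !c]) {i m : ℕ}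
    (hi : W i = c) (him : i ≤ m) : W m = c := by
  induction m, him using Nat.le_induction with
  | base => exact hi
  | succ k _ ih =>
    by_contra hne
    exact hW ((isFactor_pair_iff W c !c).2 ⟨k, ih, Bool.eq_not_iff.2 hne⟩)

theorem isFactor_flip_of_unbounded (hW : ∀ N, ∃ n, N < complexity W n) {c : Bool}
    (hc : IsFactor W [c, c]) : IsFactor W [c, !c] := by
  obtain ⟨i, hi, -⟩ := (isFactor_pair_iff W c c).1 hc
  by_contra hflip
  obtain ⟨n, hn⟩ := hW (i + 1)
  exact hn.not_ge (complexity_le_of_forall_ge_eq W (fun m => eq_of_not_isFactor_flip hflip hi) n)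

theorem complexity_two_le_two (htt : ¬ IsFactor W [true, true])
    (hff : ¬ IsFactor W [false, false]) : complexity W 2 ≤ 2 := by
  calc complexity W 2 ≤ ({[true, false], [false, true]} : Set (List Bool)).ncard := by
        refine complexity_le_ncard W (Set.toFinite _) fun u hu hfac => ?_
        match u, hu with
        | [true, true], _ => exact absurd hfac htt
        | [false, false], _ => exact absurd hfac hff
        | [true, false], _ | [false, true], _ => simp
    _ = 2 := by simp

theorem four_le_complexity_two (htt : IsFactor W [true, true]) (hff : IsFactor W [false, false])
    (htf : IsFactor W [true, false]) (hft : IsFactor W [false, true]) : 4 ≤ complexity W 2 := by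
  calc 4 = ({[true, true], [false, false], [true, false], [false, true]} :
        Finset (List Bool)).card := rfl
    _ ≤ complexity W 2 := by
        rw [← Set.ncard_coe_finset]
        refine ncard_le_complexity W fun u hu => ?_
        simp only [Finset.coe_insert, Finset.coe_singleton, Set.mem_insert_iff,
          Set.mem_singleton_iff] at hu
        rcases hu with rfl | rfl | rfl | rfl
        exacts [⟨rfl, htt⟩, ⟨rfl, hff⟩, ⟨rfl, htf⟩, ⟨rfl, hft⟩]

end Binary

/-- A Sturmian word over the two-letter alphabet `Bool` (`true = a`, `false = b`)
contains exactly one of the two words `aa`, `bb` as a factor. -/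
theorem stmt6 (W : ℕ → Bool) (h : ∀ n : ℕ, 1 ≤ n → complexity W n = n + 1) :
    Xor' (IsFactor W [true, true]) (IsFactor W [false, false]) := by
  have h2 : complexity W 2 = 3 := h 2 (by norm_num)
  have hunbdd : ∀ N, ∃ n, N < complexity W n := fun N => ⟨N + 1, by rw [h _ (by omega)]; omega⟩
  refine (xor_iff_not_iff _ _).2 ?_
  intro hiff
  by_cases htt : IsFactor W [true, true]
  · have hff := hiff.1 htt
    have := four_le_complexity_two htt hff (isFactor_flip_of_unbounded hunbdd htt)
      (isFactor_flip_of_unbounded hunbdd hff)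
    omega
  · have := complexity_two_le_two htt (mt hiff.2 htt)
    omega
end

section
/- Let α ∈ (0, 1) be irrational, let U = [c, c + α) be a half-open arc of length α in the circle ℝ/ℤ, and let x ∈ ℝ/ℤ. Define the infinite word W : ℕ → {a, b} by W(n) = a if x + nα ∈ U and W(n) = b otherwise. Then T_W(n) = n + 1 for all n ≥ 1. -/
/-!
Writing `x = ξ mod 1` and `γ = ξ - c - α`, the letter `W j` is `true` exactly when
`⌊γ + (j + 1) α⌋ > ⌊γ + j α⌋`, so `W` is the mechanical word of slope `α` and intercept `γ`.
Because `0 < α < 1` these floors grow by `0` or `1`, so the factor of length `n` at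
position `i` is determined by the values `⌊s + j α⌋`, `j ≤ n`, where `s = fract (γ + i α)`.
For `s ∈ [0, 1)` these values depend only on which of the `n` distinct cut points
`1 - fract (j α)`, `1 ≤ j ≤ n`, lie below `s`. The cuts split `[0, 1)` into `n + 1`
half-open intervals, and the orbit `fract (γ + i α)` is dense, so every interval is visited:
there are exactly `n + 1` factors.
-/

open Set Filter Topology

namespace AddCircle

lemma coe_mem_image_iff_fract_mem {S : Set ℝ} (hS : S ⊆ Ico 0 1) (z : ℝ) :
    (z : AddCircle (1 : ℝ)) ∈ (fun t : ℝ => (t : AddCircle (1 : ℝ))) '' S ↔ Int.fract z ∈ S := by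
  have : Fact ((0 : ℝ) < 1) := ⟨one_pos⟩
  have hfract : Int.fract z ∈ Ico (0 : ℝ) (0 + 1) := by
    rw [zero_add]; exact ⟨Int.fract_nonneg z, Int.fract_lt_one z⟩
  constructor
  · rintro ⟨t, ht, hte⟩
    rw [← coe_fract z, coe_eq_coe_iff_of_mem_Ico (by simpa using hS ht) hfract] at hte
    rwa [← hte]
  · exact fun h => ⟨_, h, coe_fract z⟩

lemma coe_mem_image_Ico_iff {α : ℝ} (hα : α ≤ 1) (c z : ℝ) :
    (z : AddCircle (1 : ℝ)) ∈ (fun t : ℝ => (t : AddCircle (1 : ℝ))) '' Ico c (c + α) ↔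
      Int.fract (z - c) < α := by
  have htranslate :
      (z : AddCircle (1 : ℝ)) ∈ (fun t : ℝ => (t : AddCircle (1 : ℝ))) '' Ico c (c + α) ↔
      ((z - c : ℝ) : AddCircle (1 : ℝ)) ∈ (fun t : ℝ => (t : AddCircle (1 : ℝ))) '' Ico 0 α := by
    constructor
    · rintro ⟨t, ht, hte⟩
      refine ⟨t - c, ⟨by linarith [ht.1], by linarith [ht.2]⟩, ?_⟩
      simp only [coe_sub, ← hte]
    · rintro ⟨t, ht, hte⟩
      refine ⟨t + c, ⟨by linarith [ht.1], by linarith [ht.2]⟩, ?_⟩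
      simp only [coe_add, hte, coe_sub, sub_add_cancel]
  rw [htranslate, coe_mem_image_iff_fract_mem (Ico_subset_Ico_right hα)]
  exact ⟨fun h => h.2, fun h => ⟨Int.fract_nonneg _, h⟩⟩

end AddCircle

lemma Irrational.exists_fract_add_nat_mul_mem_Ioo {α : ℝ} (hα : Irrational α) (γ : ℝ) {a b : ℝ}
    (ha : 0 ≤ a) (hab : a < b) (hb : b ≤ 1) : ∃ i : ℕ, Int.fract (γ + i * α) ∈ Ioo a b := by
  have hdense : DenseRange (fun i : ℕ => i • (α : AddCircle (1 : ℝ))) :=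
    denseRange_zsmul_iff_nsmul.mp (AddCircle.denseRange_zsmul_coe_iff.mpr (by simpa using hα))
  have hopen : IsOpen ((fun y => (γ : AddCircle (1 : ℝ)) + y) ⁻¹'
      ((fun t : ℝ => (t : AddCircle (1 : ℝ))) '' Ioo a b)) :=
    (QuotientAddGroup.isOpenMap_coe _ isOpen_Ioo).preimage (continuous_const_add _)
  obtain ⟨i, hi⟩ := hdense.exists_mem_open hopen
    ⟨(((a + b) / 2 - γ : ℝ) : AddCircle (1 : ℝ)), (a + b) / 2, ⟨by linarith, by linarith⟩,
      by simp⟩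
  refine ⟨i, (AddCircle.coe_mem_image_iff_fract_mem
    (Ioo_subset_Ico_self.trans (Ico_subset_Ico ha hb)) _).mp ?_⟩
  rw [AddCircle.coe_add, ← nsmul_eq_mul, AddCircle.coe_nsmul]
  exact hi

section Words

variable {A : Type*}

lemma setOf_isFactor_length_eq (W : ℕ → A) (n : ℕ) :
    {u : List A | u.length = n ∧ IsFactor W u} = range (fun i => factorAt W i n) := by
  ext u
  constructor
  · rintro ⟨rfl, i, hi⟩
    exact ⟨i, hi.symm⟩
  · rintro ⟨i, rfl⟩
    exact ⟨by simp [factorAt], i, by simp [factorAt]⟩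

lemma factorAt_eq_factorAt_iff {W W' : ℕ → A} {i i' n : ℕ} :
    factorAt W i n = factorAt W' i' n ↔ ∀ j < n, W (i + j) = W' (i' + j) := by
  simp [factorAt, List.map_inj_left]

end Words

lemma eq_of_forall_lt_succ_iff {a b : ℕ → ℤ} (ha : ∀ j, a (j + 1) ∈ Icc (a j) (a j + 1))
    (hb : ∀ j, b (j + 1) ∈ Icc (b j) (b j + 1)) (h0 : a 0 = b 0) {n : ℕ}
    (h : ∀ j < n, (a j < a (j + 1) ↔ b j < b (j + 1))) : ∀ j ≤ n, a j = b j := by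
  intro j hj
  induction j with
  | zero => exact h0
  | succ k ih =>
    have := h k hj
    have := ih (k.le_succ.trans hj)
    obtain ⟨_, _⟩ := ha k
    obtain ⟨_, _⟩ := hb k
    omega

lemma Int.fract_lt_iff_floor_sub_lt (t a : ℝ) : Int.fract t < a ↔ ⌊t - a⌋ < ⌊t⌋ := by
  rw [Int.floor_lt, Int.fract]
  constructor <;> intro h <;> linarith [Int.floor_le t]

noncomputable def mechanicalWord (α s : ℝ) (j : ℕ) : Bool :=
  decide (⌊s + j * α⌋ < ⌊s + (j + 1 : ℕ) * α⌋)

lemma mechanicalWord_nat_add (α s : ℝ) (i j : ℕ) :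
    mechanicalWord α s (i + j) = mechanicalWord α (s + i * α) j := by
  simp only [mechanicalWord]
  congr 3 <;> push_cast <;> ring_nf

lemma mechanicalWord_add_intCast (α s : ℝ) (m : ℤ) :
    mechanicalWord α (s + m) = mechanicalWord α s := by
  funext j
  simp only [mechanicalWord, add_right_comm _ (m : ℝ), Int.floor_add_intCast, add_lt_add_iff_right]

lemma mechanicalWord_fract (α s : ℝ) : mechanicalWord α (Int.fract s) = mechanicalWord α s := by
  rw [← mechanicalWord_add_intCast α (Int.fract s) ⌊s⌋, Int.fract_add_floor]

lemma Int.floor_add_succ_mul_mem_Icc {α : ℝ} (h0 : 0 ≤ α) (h1 : α ≤ 1) (s : ℝ) (j : ℕ) :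
    ⌊s + (j + 1 : ℕ) * α⌋ ∈ Icc ⌊s + j * α⌋ (⌊s + j * α⌋ + 1) := by
  constructor
  · exact Int.floor_le_floor (by push_cast; linarith)
  · rw [← Int.floor_add_one]
    exact Int.floor_le_floor (by push_cast; linarith)

lemma Int.floor_add_eq_floor_add_iff {s s' : ℝ} (hs : s ∈ Ico (0 : ℝ) 1) (hs' : s' ∈ Ico (0 : ℝ) 1)
    (t : ℝ) : ⌊s + t⌋ = ⌊s' + t⌋ ↔ (1 - Int.fract t ≤ s ↔ 1 - Int.fract t ≤ s') := by
  have hcell : ∀ r ∈ Ico (0 : ℝ) 1,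
      ⌊r + t⌋ = ⌊t⌋ + if 1 - Int.fract t ≤ r then 1 else 0 := by
    intro r hr
    rw [show r + t = r + Int.fract t + ⌊t⌋ by rw [add_assoc, Int.fract_add_floor],
      Int.floor_add_intCast, add_comm]
    congr 1
    have := Int.fract_nonneg t
    have := Int.fract_lt_one t
    split_ifs with h <;> rw [Int.floor_eq_iff] <;> constructor <;> push_cast <;>
      linarith [hr.1, hr.2]
  rw [hcell s hs, hcell s' hs']
  by_cases h : 1 - Int.fract t ≤ s <;> by_cases h' : 1 - Int.fract t ≤ s' <;> simp [h, h']

def SameCell (Θ : Finset ℝ) (s s' : ℝ) : Prop := ∀ θ ∈ Θ, θ ≤ s ↔ θ ≤ s'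

namespace SameCell

lemma le {Θ : Finset ℝ} (hΘ : ∀ θ ∈ Θ, 0 < θ) {d d' : ℝ} (hd : d ∈ insert 0 Θ)
    (hd' : d' ∈ insert 0 Θ) (h : SameCell Θ d d') : d ≤ d' := by
  rcases Finset.mem_insert.mp hd with rfl | hd
  · rcases Finset.mem_insert.mp hd' with rfl | hd'
    exacts [le_rfl, (hΘ d' hd').le]
  · exact (h d hd).mp le_rfl

variable (Θ : Finset ℝ)

lemma exists_mem_insert_zero {s : ℝ} (hs : 0 ≤ s) : ∃ d ∈ insert 0 Θ, SameCell Θ d s := by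
  have hne : ((insert 0 Θ).filter (· ≤ s)).Nonempty := ⟨0, by simp [hs]⟩
  obtain ⟨hd, hds⟩ := Finset.mem_filter.mp (Finset.max'_mem _ hne)
  refine ⟨_, hd, fun θ hθ => ⟨fun h => h.trans hds, fun h => ?_⟩⟩
  exact Finset.le_max' _ θ (Finset.mem_filter.mpr ⟨Finset.mem_insert_of_mem hθ, h⟩)

lemma eventually_nhdsGE (d : ℝ) : ∀ᶠ s in 𝓝[≥] d, SameCell Θ s d := by
  refine (eventually_all_finset Θ).mpr fun θ _ => ?_
  rcases le_or_gt θ d with hθ | hθ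
  · filter_upwards [self_mem_nhdsWithin] with s hs using iff_of_true (hθ.trans hs) hθ
  · filter_upwards [Ico_mem_nhdsGE hθ] with s hs using iff_of_false hs.2.not_ge hθ.not_ge

end SameCell

lemma ncard_image_eq_card_add_one_of_sameCell {X : Type*} {Θ : Finset ℝ}
    (hΘ : ∀ θ ∈ Θ, θ ∈ Ioo 0 1) {f : ℝ → X}
    (hf : ∀ s ∈ Ico (0 : ℝ) 1, ∀ s' ∈ Ico (0 : ℝ) 1, f s = f s' ↔ SameCell Θ s s')
    {P : Set ℝ} (hP : P ⊆ Ico 0 1)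
    (hP_dense : ∀ a b : ℝ, 0 ≤ a → a < b → b ≤ 1 → (P ∩ Ioo a b).Nonempty) :
    (f '' P).ncard = Θ.card + 1 := by
  have hD : ∀ d ∈ insert 0 Θ, d ∈ Ico (0 : ℝ) 1 := by
    simp only [Finset.forall_mem_insert]
    exact ⟨⟨le_rfl, one_pos⟩, fun θ hθ => Ioo_subset_Ico_self (hΘ θ hθ)⟩
  have himage : f '' P = f '' ↑(insert 0 Θ) := by
    apply Subset.antisymm
    · rintro _ ⟨s, hs, rfl⟩
      obtain ⟨d, hd, hds⟩ := SameCell.exists_mem_insert_zero Θ (hP hs).1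
      exact ⟨d, hd, (hf d (hD d hd) s (hP hs)).mpr hds⟩
    · rintro _ ⟨d, hd, rfl⟩
      obtain ⟨b, hdb, hsub⟩ := mem_nhdsGE_iff_exists_Ico_subset.mp
        (SameCell.eventually_nhdsGE Θ d)
      obtain ⟨s, hs, hsd⟩ := hP_dense d (min b 1) (hD d hd).1 (lt_min hdb (hD d hd).2)
        (min_le_right _ _)
      exact ⟨s, hs, (hf s (hP hs) d (hD d hd)).mpr
        (hsub ⟨hsd.1.le, hsd.2.trans_le (min_le_left _ _)⟩)⟩
  have hpos : ∀ θ ∈ Θ, 0 < θ := fun θ hθ => (hΘ θ hθ).1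
  have hinj : InjOn f ↑(insert 0 Θ) := fun d hd d' hd' h =>
    have hsame := (hf d (hD d hd) d' (hD d' hd')).mp h
    (SameCell.le hpos hd hd' hsame).antisymm
      (SameCell.le hpos hd' hd fun θ hθ => (hsame θ hθ).symm)
  rw [himage, hinj.ncard_image, ncard_coe_finset,
    Finset.card_insert_of_notMem fun h0 => (hpos 0 h0).false]

lemma Irrational.injective_fract_nat_mul {α : ℝ} (hα : Irrational α) :
    Function.Injective fun j : ℕ => Int.fract (j * α) := by
  intro j k hjk
  obtain ⟨z, hz⟩ := Int.fract_eq_fract.mp hjk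
  by_contra hne
  have hne' : (j : ℤ) - k ≠ 0 := sub_ne_zero.mpr (by exact_mod_cast hne)
  exact (hα.intCast_mul hne').ne_int z (by push_cast; linarith)

noncomputable def rotationCuts (α : ℝ) (n : ℕ) : Finset ℝ :=
  (Finset.Icc 1 n).image fun j : ℕ => 1 - Int.fract (j * α)

lemma mem_Ioo_of_mem_rotationCuts {α : ℝ} (hα : Irrational α) {n : ℕ} :
    ∀ θ ∈ rotationCuts α n, θ ∈ Ioo (0 : ℝ) 1 := by
  refine Finset.forall_mem_image.mpr fun j hj => ?_
  have hj0 : j ≠ 0 := Nat.one_le_iff_ne_zero.mp (Finset.mem_Icc.mp hj).1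
  have hpos : 0 < Int.fract (j * α) := Int.fract_pos.mpr ((hα.natCast_mul hj0).ne_int _)
  exact ⟨by linarith [Int.fract_lt_one (j * α)], by linarith⟩

lemma card_rotationCuts {α : ℝ} (hα : Irrational α) (n : ℕ) : (rotationCuts α n).card = n := by
  rw [rotationCuts, Finset.card_image_of_injective _
    fun j k h => hα.injective_fract_nat_mul (sub_right_inj.mp h), Nat.card_Icc, Nat.add_sub_cancel]

lemma factorAt_mechanicalWord_eq_iff {α : ℝ} (h0 : 0 ≤ α) (h1 : α ≤ 1) {s s' : ℝ}
    (hs : s ∈ Ico (0 : ℝ) 1) (hs' : s' ∈ Ico (0 : ℝ) 1) (n : ℕ) :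
    factorAt (mechanicalWord α s) 0 n = factorAt (mechanicalWord α s') 0 n ↔
      SameCell (rotationCuts α n) s s' := by
  have hfloor0 : ∀ r ∈ Ico (0 : ℝ) 1, ⌊r + ((0 : ℕ) : ℝ) * α⌋ = 0 := fun r hr => by
    simpa [Int.floor_eq_zero_iff] using hr
  calc factorAt (mechanicalWord α s) 0 n = factorAt (mechanicalWord α s') 0 n
      ↔ ∀ j ≤ n, ⌊s + j * α⌋ = ⌊s' + j * α⌋ := by
        simp only [factorAt_eq_factorAt_iff, zero_add, mechanicalWord, decide_eq_decide]
        refine ⟨eq_of_forall_lt_succ_iff (Int.floor_add_succ_mul_mem_Icc h0 h1 s)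
          (Int.floor_add_succ_mul_mem_Icc h0 h1 s') ((hfloor0 s hs).trans (hfloor0 s' hs').symm),
          fun h j hj => ?_⟩
        rw [h j hj.le, h (j + 1) hj]
    _ ↔ SameCell (rotationCuts α n) s s' := by
        simp only [Int.floor_add_eq_floor_add_iff hs hs', SameCell, rotationCuts,
          Finset.forall_mem_image, Finset.mem_Icc]
        refine ⟨fun h j hj => h j hj.2, fun h j hj => ?_⟩
        rcases j.eq_zero_or_pos with rfl | hj0
        · simp [hs.2.not_ge, hs'.2.not_ge]
        · exact h ⟨hj0, hj⟩

/-- The coding of an irrational rotation of the circle `ℝ/ℤ` by a half-open arc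
`[c, c + α)` of length equal to the rotation angle `α` has complexity `n + 1`
(`true = a`, `false = b`). -/
theorem stmt10 (α : ℝ) (hirr : Irrational α) (h0 : 0 < α) (h1 : α < 1)
    (c : ℝ) (x : AddCircle (1 : ℝ)) (W : ℕ → Bool)
    (hW : ∀ n : ℕ, W n = true ↔
      x + ((n * α : ℝ) : AddCircle (1 : ℝ)) ∈
        (fun t : ℝ => (t : AddCircle (1 : ℝ))) '' Set.Ico c (c + α)) :
    ∀ n : ℕ, 1 ≤ n → complexity W n = n + 1 := by
  intro n _
  obtain ⟨ξ, rfl⟩ := QuotientAddGroup.mk_surjective x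
  have hW : W = mechanicalWord α (ξ - c - α) := by
    funext j
    rw [Bool.eq_iff_iff, hW, ← AddCircle.coe_add, AddCircle.coe_mem_image_Ico_iff h1.le,
      Int.fract_lt_iff_floor_sub_lt, mechanicalWord, decide_eq_true_iff]
    push_cast
    ring_nf
  set γ := ξ - c - α
  have hfactor : (fun i => factorAt W i n) =
      (fun s => factorAt (mechanicalWord α s) 0 n) ∘ fun i : ℕ => Int.fract (γ + i * α) := by
    funext i
    rw [Function.comp_apply, mechanicalWord_fract, hW, factorAt_eq_factorAt_iff]
    exact fun j _ => by rw [zero_add, mechanicalWord_nat_add]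
  have horbit : range (fun i : ℕ => Int.fract (γ + i * α)) ⊆ Ico 0 1 := by
    rintro _ ⟨i, rfl⟩
    exact ⟨Int.fract_nonneg _, Int.fract_lt_one _⟩
  have horbit_dense (a b : ℝ) (ha : 0 ≤ a) (hab : a < b) (hb : b ≤ 1) :
      (range (fun i : ℕ => Int.fract (γ + i * α)) ∩ Ioo a b).Nonempty := by
    obtain ⟨i, hi⟩ := hirr.exists_fract_add_nat_mul_mem_Ioo γ ha hab hb
    exact ⟨_, ⟨i, rfl⟩, hi⟩
  rw [complexity, setOf_isFactor_length_eq, hfactor, range_comp,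
    ncard_image_eq_card_add_one_of_sameCell (mem_Ioo_of_mem_rotationCuts hirr)
      (fun s hs s' hs' => factorAt_mechanicalWord_eq_iff h0.le h1.le hs hs' n) horbit horbit_dense,
    card_rotationCuts hirr]
end

section
/- Let u be a finite word over the two-letter alphabet {a, b} and let k ≥ 2. Then the word u² (the concatenation of two copies of u) is balanced if and only if the word u^k (the concatenation of k copies of u) is balanced. -/
/-- `k`-th power of a finite word: the concatenation of `k` copies of `u`. -/
def listPow {A : Type*} (u : List A) : ℕ → List A
  | 0 => []
  | n + 1 => u ++ listPow u n

/-- A finite word is balanced if any two of its factors of equal length contain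
almost the same number of occurrences of each letter. -/
def BalancedFin {A : Type*} [DecidableEq A] (w : List A) : Prop :=
  ∀ u v : List A, u <:+: w → v <:+: w → u.length = v.length →
    ∀ a : A, |(u.count a : ℤ) - (v.count a : ℤ)| ≤ 1

/-! A factor of `uᵏ` starting at position `i` is a prefix of a power of the conjugate
`u.rotate i`, since `x (y x)ᵐ = (x y)ᵐ x`. Such a prefix of length `q |u| + r` with `r < |u|`
consists of `q` copies of the rotation, which has the letter counts of `u`, followed by a prefix of
the rotation, which is a factor of `u²`. So two factors of `uᵏ` of equal length differ in their
letter counts exactly as two factors of `u²` of equal length `r` do. -/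

section

variable {A : Type*}

@[simp] lemma listPow_zero (u : List A) : listPow u 0 = [] := rfl

@[simp] lemma listPow_succ (u : List A) (n : ℕ) : listPow u (n + 1) = u ++ listPow u n := rfl

lemma listPow_two (u : List A) : listPow u 2 = u ++ u := by simp

lemma listPow_add (u : List A) (m n : ℕ) :
    listPow u (m + n) = listPow u m ++ listPow u n := by
  induction m with
  | zero => simp
  | succ m ih => simp [Nat.succ_add, ih]

@[simp] lemma listPow_nil (m : ℕ) : listPow ([] : List A) m = [] := by
  induction m <;> simp [*]

lemma listPow_prefix_listPow (u : List A) {m n : ℕ} (h : m ≤ n) :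
    listPow u m <+: listPow u n := by
  obtain ⟨d, rfl⟩ := Nat.exists_eq_add_of_le h
  rw [listPow_add]
  exact List.prefix_append _ _

lemma count_listPow [BEq A] (u : List A) (m : ℕ) (a : A) :
    (listPow u m).count a = m * u.count a := by
  induction m with
  | zero => simp
  | succ m ih => simp [ih, Nat.succ_mul, Nat.add_comm]

lemma append_listPow_append_comm (x y : List A) (m : ℕ) :
    x ++ listPow (y ++ x) m = listPow (x ++ y) m ++ x := by
  induction m with
  | zero => simp
  | succ m ih => simp [← ih]

lemma List.IsPrefix.tail {l₁ l₂ : List A} (h : l₁ <+: l₂) : l₁.tail <+: l₂.tail := by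
  simpa only [List.drop_one] using h.drop 1

lemma tail_listPow_prefix_listPow_rotate_one (w : List A) (m : ℕ) :
    (listPow w m).tail <+: listPow (w.rotate 1) m := by
  cases w with
  | nil => simp
  | cons c w =>
    have h := append_listPow_append_comm [c] w m
    rw [List.rotate_cons_succ, List.rotate_zero]
    calc (listPow (c :: w) m).tail <+: (listPow (c :: w) m ++ [c]).tail :=
          (List.prefix_append _ _).tail
      _ = listPow (w ++ [c]) m := by rw [← List.singleton_append, ← h]; rfl

lemma drop_listPow_prefix_listPow_rotate (u : List A) (m i : ℕ) :
    (listPow u m).drop i <+: listPow (u.rotate i) m := by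
  induction i with
  | zero => simp
  | succ i ih =>
    rw [← List.tail_drop, ← List.rotate_rotate]
    exact ih.tail.trans (tail_listPow_prefix_listPow_rotate_one _ m)

lemma eq_listPow_append_take_of_prefix_listPow {v w : List A} {m : ℕ}
    (h : v <+: listPow w m) :
    v = listPow w (v.length / w.length) ++ w.take (v.length % w.length) := by
  rcases eq_or_ne w [] with rfl | hw
  · simpa using h
  have hw0 : 0 < w.length := List.length_pos_iff.mpr hw
  induction m generalizing v with
  | zero => simp_all
  | succ m ih =>
    rcases Nat.lt_or_ge v.length w.length with hvw | hwv
    · have hv : v <+: w := List.prefix_of_prefix_length_le h (List.prefix_append _ _) hvw.le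
      rw [Nat.div_eq_of_lt hvw, Nat.mod_eq_of_lt hvw, listPow_zero, List.nil_append]
      exact List.prefix_iff_eq_take.mp hv
    · obtain ⟨t, rfl⟩ : w <+: v := List.prefix_of_prefix_length_le (List.prefix_append _ _) h hwv
      rw [listPow_succ, List.prefix_append_right_inj] at h
      rw [List.length_append, Nat.add_comm, Nat.add_div_right _ hw0, Nat.add_mod_right,
        listPow_succ, List.append_assoc, ← ih h]

lemma rotate_infix_append_self (u : List A) (i : ℕ) : u.rotate i <:+: u ++ u := by
  rw [List.rotate_eq_drop_append_take_mod]
  set n := i % u.length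
  have h : u ++ u = u.take n ++ (u.drop n ++ u.take n) ++ u.drop n := by
    rw [List.append_assoc, List.append_assoc, List.take_append_drop, ← List.append_assoc,
      List.take_append_drop]
  rw [h]
  exact List.infix_append _ _ _

lemma exists_infix_listPow_two_of_infix_listPow [BEq A] {u v : List A} {k : ℕ}
    (h : v <:+: listPow u k) :
    ∃ b, b <:+: listPow u 2 ∧ b.length = v.length % u.length ∧
      ∀ a, v.count a = b.count a + v.length / u.length * u.count a := by
  rcases eq_or_ne u [] with rfl | hu
  · rw [listPow_nil, List.infix_nil] at h
    exact ⟨[], List.nil_infix, by simp [h], by simp [h]⟩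
  obtain ⟨t, hvt, htk⟩ := List.infix_iff_prefix_suffix.mp h
  obtain ⟨i, rfl⟩ : ∃ i, t = (listPow u k).drop i := ⟨_, List.suffix_iff_eq_drop.mp htk⟩
  have hdecomp := eq_listPow_append_take_of_prefix_listPow
    (hvt.trans (drop_listPow_prefix_listPow_rotate u k i))
  rw [List.length_rotate] at hdecomp
  refine ⟨(u.rotate i).take (v.length % u.length), ?_, ?_, fun a => ?_⟩
  · exact (List.take_prefix _ _).isInfix.trans (listPow_two u ▸ rotate_infix_append_self u i)
  · have := Nat.mod_lt v.length (List.length_pos_iff.mpr hu)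
    simp only [List.length_take, List.length_rotate]
    omega
  · conv_lhs => rw [hdecomp]
    rw [List.count_append, count_listPow, (List.rotate_perm u i).count_eq, Nat.add_comm]

lemma BalancedFin.of_infix [DecidableEq A] {w w' : List A} (hw : w <:+: w')
    (h : BalancedFin w') : BalancedFin w :=
  fun u v hu hv huv a => h u v (hu.trans hw) (hv.trans hw) huv a

lemma BalancedFin.listPow_of_listPow_two [DecidableEq A] {u : List A}
    (h : BalancedFin (listPow u 2)) (k : ℕ) : BalancedFin (listPow u k) := by
  intro v w hv hw hvw a
  obtain ⟨b, hb, hb_len, hb_count⟩ := exists_infix_listPow_two_of_infix_listPow hv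
  obtain ⟨c, hc, hc_len, hc_count⟩ := exists_infix_listPow_two_of_infix_listPow hw
  rw [hb_count, hc_count, hvw, Nat.cast_add, Nat.cast_add, add_sub_add_right_eq_sub]
  exact h b c hb hc (by rw [hb_len, hc_len, hvw]) a

end

/-- For a finite word `u` over the two-letter alphabet `Bool` and `k ≥ 2`,
`u²` is balanced iff `uᵏ` is balanced. -/
theorem stmt13 (u : List Bool) (k : ℕ) (hk : 2 ≤ k) :
    BalancedFin (listPow u 2) ↔ BalancedFin (listPow u k) :=
  ⟨fun h => h.listPow_of_listPow_two k, fun h => h.of_infix (listPow_prefix_listPow u hk).isInfix⟩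
end

section
/- For every finite balanced word w over the two-letter alphabet {a, b}, there exist letters x, y ∈ {a, b} such that the word wx (w extended by x on the right) is balanced and the word yw (w extended by y on the left) is balanced. -/
open List

section Alphabet

variable {A : Type*} [DecidableEq A]

theorem BalancedFin.reverse {w : List A} (hw : BalancedFin w) : BalancedFin w.reverse := by
  intro u v hu hv hl a
  simpa using hw u.reverse v.reverse (by simpa using hu.reverse) (by simpa using hv.reverse)
    (by simpa using hl) a

theorem BalancedFin.not_infix_pair {w t : List A} (hw : BalancedFin w) {a b : A} (hab : a ≠ b)
    (ha : (a :: (t ++ [a])) <:+: w) (hb : (b :: (t ++ [b])) <:+: w) : False := by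
  have h := abs_le.mp (hw _ _ ha hb (by simp) a)
  simp [count_append, hab.symm] at h
  omega

theorem List.exists_append_cons_of_ne {t t' : List A} (hlen : t.length = t'.length)
    (hne : t ≠ t') :
    ∃ p a b q q', t = p ++ a :: q ∧ t' = p ++ b :: q' ∧ a ≠ b ∧ q.length = q'.length := by
  induction t generalizing t' with
  | nil => cases t' <;> simp_all
  | cons a r ih =>
    cases t' with
    | nil => simp at hlen
    | cons b r' =>
      by_cases hab : a = b
      · subst hab
        obtain ⟨p, c, d, q, q', rfl, rfl, hcd, hq⟩ :=
          ih (by simpa using hlen) (fun h => hne (by rw [h]))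
        exact ⟨a :: p, c, d, q, q', rfl, rfl, hcd, hq⟩
      · exact ⟨[], a, b, r, r', rfl, rfl, hab, by simpa using hlen⟩

end Alphabet

def IsUnbalancedPair (u v : List Bool) : Prop :=
  u.length = v.length ∧ v.count true + 2 ≤ u.count true

def IsMinimalUnbalancedPair (u v : List Bool) : Prop :=
  IsUnbalancedPair u v ∧
    ∀ u' v', u' <:+: u → v' <:+: v → u'.length < u.length → ¬ IsUnbalancedPair u' v'

theorem exists_isUnbalancedPair {x : List Bool} (h : ¬ BalancedFin x) :
    ∃ u v, u <:+: x ∧ v <:+: x ∧ IsUnbalancedPair u v := by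
  simp only [BalancedFin, not_forall, not_le] at h
  obtain ⟨u, v, hu, hv, hl, a, ha⟩ := h
  have := count_true_add_count_false u
  have := count_true_add_count_false v
  by_cases huv : v.count true + 2 ≤ u.count true
  · exact ⟨u, v, hu, hv, hl, huv⟩
  · refine ⟨v, u, hv, hu, hl.symm, ?_⟩
    cases a <;> rcases lt_abs.mp ha with ha | ha <;> omega

theorem exists_isMinimalUnbalancedPair {x : List Bool} (h : ¬ BalancedFin x) :
    ∃ u v, u <:+: x ∧ v <:+: x ∧ IsMinimalUnbalancedPair u v := by
  classical
  have hex : ∃ n, ∃ u v, u <:+: x ∧ v <:+: x ∧ IsUnbalancedPair u v ∧ u.length = n := by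
    obtain ⟨u, v, hu, hv, huv⟩ := exists_isUnbalancedPair h
    exact ⟨_, u, v, hu, hv, huv, rfl⟩
  obtain ⟨u, v, hu, hv, huv, hn⟩ := Nat.find_spec hex
  refine ⟨u, v, hu, hv, huv, fun u' v' hu' hv' hlt huv' => ?_⟩
  have := Nat.find_min' hex ⟨u', v', hu'.trans hu, hv'.trans hv, huv', rfl⟩
  omega

theorem IsMinimalUnbalancedPair.eq_cons_append {u v : List Bool}
    (h : IsMinimalUnbalancedPair u v) : ∃ t t', u = true :: (t ++ [true]) ∧
      v = false :: (t' ++ [false]) ∧ t.count true = t'.count true := by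
  obtain ⟨⟨hlen, hcount⟩, hmin⟩ := h
  rcases u with _ | ⟨a, u⟩
  · simp at hcount
  rcases v with _ | ⟨b, v⟩
  · simp at hlen
  have hab : a = true ∧ b = false := by
    have := hmin u v (suffix_cons a u).isInfix (suffix_cons b v).isInfix (by simp)
    simp only [IsUnbalancedPair, length_cons, not_and, not_le] at this hlen
    cases a <;> cases b <;> simp at hcount this ⊢ <;> omega
  obtain ⟨rfl, rfl⟩ := hab
  rcases u.eq_nil_or_concat' with rfl | ⟨t, c, rfl⟩
  · simp at hcount
  rcases v.eq_nil_or_concat' with rfl | ⟨t', d, rfl⟩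
  · simp at hlen
  have hshort := hmin (true :: t) (false :: t') (prefix_append _ [c]).isInfix
    (prefix_append _ [d]).isInfix (by simp)
  simp only [IsUnbalancedPair, length_cons, length_append, not_and, not_le] at hshort hlen
  have hcd : c = true ∧ d = false := by
    cases c <;> cases d <;> simp at hcount hshort ⊢ <;> omega
  obtain ⟨rfl, rfl⟩ := hcd
  refine ⟨t, t', rfl, rfl, ?_⟩
  simp at hcount hshort
  omega

theorem IsMinimalUnbalancedPair.exists_eq {u v : List Bool} (h : IsMinimalUnbalancedPair u v) :
    ∃ t, u = true :: (t ++ [true]) ∧ v = false :: (t ++ [false]) := by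
  obtain ⟨t, t', rfl, rfl, hcount⟩ := h.eq_cons_append
  refine ⟨t, rfl, ?_⟩
  by_contra hne
  have hlen : t.length = t'.length := by simpa using h.1.1
  obtain ⟨p, a, b, q, q', rfl, rfl, hab, hq⟩ :=
    exists_append_cons_of_ne hlen (fun h => hne (by rw [h]))
  simp only [count_append, count_cons] at hcount
  -- At the first difference of `t` and `t'`, cutting `u` and `v` there leaves a shorter
  -- unbalanced pair: the suffixes if it reads `0`/`1`, the prefixes `1p1`, `0p0` if it reads
  -- `1`/`0`.
  cases a <;> cases b
  · exact hab rfl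
  · refine h.2 (q ++ [true]) (q' ++ [false]) ⟨true :: p ++ [false], [], by simp⟩
      ⟨false :: p ++ [true], [], by simp⟩ (by simp; omega) ⟨by simp [hq], ?_⟩
    simp at hcount ⊢
    omega
  · exact h.2 (true :: (p ++ [true])) (false :: (p ++ [false])) ⟨[], q ++ [true], by simp⟩
      ⟨[], q' ++ [false], by simp⟩ (by simp) ⟨by simp, by simp⟩
  · exact hab rfl

theorem exists_forall_infix_of_not_balancedFin {x : List Bool} (h : ¬ BalancedFin x) :
    ∃ t, ∀ a : Bool, (a :: (t ++ [a])) <:+: x := by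
  obtain ⟨u, v, hu, hv, huv⟩ := exists_isMinimalUnbalancedPair h
  obtain ⟨t, rfl, rfl⟩ := huv.exists_eq
  exact ⟨t, fun a => by cases a <;> assumption⟩

theorem BalancedFin.exists_of_not_balancedFin_concat {w : List Bool} (hw : BalancedFin w)
    {a : Bool} (h : ¬ BalancedFin (w ++ [a])) :
    ∃ t, ((!a) :: (t ++ [!a])) <:+: w ∧ (a :: t) <:+ w := by
  obtain ⟨t, ht⟩ := exists_forall_infix_of_not_balancedFin h
  have hnot : ((!a) :: (t ++ [!a])) <:+: w := by
    rcases infix_concat_iff.mp (ht !a) with hs | hi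
    · rcases suffix_concat_iff.mp hs with hs | ⟨s, hs, -⟩
      · simp at hs
      · rw [← cons_append] at hs
        simpa using (append_inj' hs rfl).2
    · exact hi
  refine ⟨t, hnot, ?_⟩
  rcases infix_concat_iff.mp (ht a) with hs | hi
  · rcases suffix_concat_iff.mp hs with hs | ⟨s, hs, hsw⟩
    · simp at hs
    · rw [← cons_append, append_left_inj] at hs
      exact hs ▸ hsw
  · exact (hw.not_infix_pair (by simp) hi hnot).elim

theorem BalancedFin.exists_balancedFin_concat {w : List Bool} (hw : BalancedFin w) :
    ∃ x, BalancedFin (w ++ [x]) := by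
  by_contra h
  simp only [not_exists] at h
  obtain ⟨t, ht, hts⟩ := hw.exists_of_not_balancedFin_concat (h true)
  obtain ⟨s, hs, hss⟩ := hw.exists_of_not_balancedFin_concat (h false)
  simp only [Bool.not_true, Bool.not_false] at ht hs
  rcases suffix_or_suffix_of_suffix hts hss with hsuf | hsuf
  · obtain ⟨r, rfl⟩ := (suffix_cons_iff.mp hsuf).resolve_left (by simp)
    exact hw.not_infix_pair (a := true) (b := false) (by simp)
      (.trans ⟨true :: r, [], by simp⟩ hs) ht
  · obtain ⟨r, rfl⟩ := (suffix_cons_iff.mp hsuf).resolve_left (by simp)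
    exact hw.not_infix_pair (a := true) (b := false) (by simp) hs
      (.trans ⟨false :: r, [], by simp⟩ ht)

/-- Every finite balanced word over the two-letter alphabet `Bool` can be extended
by a letter on the right and by a letter on the left so as to stay balanced. -/
theorem stmt14 (w : List Bool) (hw : BalancedFin w) :
    ∃ x y : Bool, BalancedFin (w ++ [x]) ∧ BalancedFin (y :: w) := by
  obtain ⟨x, hx⟩ := hw.exists_balancedFin_concat
  obtain ⟨y, hy⟩ := hw.reverse.exists_balancedFin_concat
  exact ⟨x, y, hx, by simpa using hy.reverse⟩
end
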